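/- Let (Ω, 𝒜, μ) be a measure space, θ₀ ∈ ℝ, and let f : ℝ → Ω → ℝ be a family of functions such that f(θ₀, x) > 0 for all x, for each x the map θ ↦ f(θ, x) is twice differentiable at θ₀ (write f'(θ₀, x) and f''(θ₀, x) for the first and second derivatives in θ at θ₀), and f(θ₀, ·), f'(θ₀, ·), f''(θ₀, ·) are integrable. Fix κ̃₁ ∈ ℝ and κ̃₂ ∈ ℝ, and let Φ : Ω → ℝ be the indicator of the measurable set S = {x : f''(θ₀, x)/f(θ₀, x) > κ̃₂ · f'(θ₀, x)/f(θ₀, x) + κ̃₁}, i.e. the set where the LMPU statistic (∂²/∂θ² log f + (∂/∂θ log f)² − κ̃₂ ∂/∂θ log f)|_{θ=θ₀} exceeds κ̃₁. Then for every measurable ψ : Ω → ℝ with 0 ≤ ψ ≤ 1, such that ψ·f(θ₀,·), ψ·f'(θ₀,·), ψ·f''(θ₀,·) are integrable, ∫ ψ f(θ₀, ·) dμ = ∫ Φ f(θ₀, ·) dμ, and ∫ ψ f'(θ₀, ·) dμ = ∫ Φ f'(θ₀, ·) dμ, one has ∫ ψ f''(θ₀, ·) dμ ≤ ∫ Φ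 f''(θ₀, ·) dμ. -/

import Mathlib

/-!
The test `Φ = 1_S` and any competitor `ψ` with values in `[0, 1]` satisfy
`(Φ - ψ) (f'' - κ₁ f - κ₂ f') ≥ 0` pointwise, because on `S` the second factor is positive and
`Φ - ψ = 1 - ψ ≥ 0`, while off `S` both factors are nonpositive. Integrating, the two side
constraints cancel the `κ₁`- and `κ₂`-terms, leaving `∫ Φ f'' - ∫ ψ f'' ≥ 0`: this is the
generalized Neyman–Pearson lemma.
-/

open MeasureTheory Topology Filter

theorem MeasureTheory.Integrable.indicator_one_mul {Ω : Type*} [MeasurableSpace Ω]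
    {μ : Measure Ω} {S : Set Ω} (hS : MeasurableSet S) {g : Ω → ℝ} (hg : Integrable g μ) :
    Integrable (fun x => S.indicator (fun _ => (1 : ℝ)) x * g x) μ := by
  simpa only [← Set.indicator_mul_left, one_mul] using hg.indicator hS

theorem indicator_one_sub_mul_nonneg {α : Type*} {S : Set α} {T ψ : α → ℝ}
    (hS : ∀ x, x ∈ S ↔ 0 < T x) (hψ0 : ∀ x, 0 ≤ ψ x) (hψ1 : ∀ x, ψ x ≤ 1) (x : α) :
    0 ≤ (S.indicator (fun _ => (1 : ℝ)) x - ψ x) * T x := by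
  by_cases hx : x ∈ S
  · rw [Set.indicator_of_mem hx]
    exact mul_nonneg (sub_nonneg.2 (hψ1 x)) ((hS x).1 hx).le
  · rw [Set.indicator_of_notMem hx, zero_sub]
    exact mul_nonneg_of_nonpos_of_nonpos (neg_nonpos.2 (hψ0 x)) (not_lt.1 ((hS x).not.1 hx))

theorem integral_mul_le_of_sub_mul_nonneg {Ω ι : Type*} [MeasurableSpace Ω] {μ : Measure Ω}
    (s : Finset ι) {g : ι → Ω → ℝ} (k : ι → ℝ) {h φ ψ : Ω → ℝ}
    (hφg : ∀ i ∈ s, Integrable (fun x => φ x * g i x) μ)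
    (hψg : ∀ i ∈ s, Integrable (fun x => ψ x * g i x) μ)
    (hφh : Integrable (fun x => φ x * h x) μ) (hψh : Integrable (fun x => ψ x * h x) μ)
    (hconstr : ∀ i ∈ s, ∫ x, ψ x * g i x ∂μ = ∫ x, φ x * g i x ∂μ)
    (hpt : ∀ x, 0 ≤ (φ x - ψ x) * (h x - ∑ i ∈ s, k i * g i x)) :
    ∫ x, ψ x * h x ∂μ ≤ ∫ x, φ x * h x ∂μ := by
  have hdiff : ∀ i ∈ s, Integrable (fun x => k i * (φ x * g i x - ψ x * g i x)) μ :=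
    fun i hi => ((hφg i hi).sub (hψg i hi)).const_mul (k i)
  have hconstr_diff : ∀ i ∈ s, ∫ x, k i * (φ x * g i x - ψ x * g i x) ∂μ = 0 := by
    intro i hi
    rw [integral_const_mul, integral_sub (hφg i hi) (hψg i hi), hconstr i hi, sub_self, mul_zero]
  have hexpand : (fun x => (φ x - ψ x) * (h x - ∑ i ∈ s, k i * g i x)) =
      fun x => (φ x * h x - ψ x * h x) - ∑ i ∈ s, k i * (φ x * g i x - ψ x * g i x) := by
    funext x
    rw [mul_sub, Finset.mul_sum, sub_mul]
    exact congrArg _ (Finset.sum_congr rfl fun i _ => by ring)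
  have hgap : ∫ x, (φ x - ψ x) * (h x - ∑ i ∈ s, k i * g i x) ∂μ =
      ∫ x, φ x * h x ∂μ - ∫ x, ψ x * h x ∂μ := by
    rw [hexpand, integral_sub (f := fun x => φ x * h x - ψ x * h x) (hφh.sub hψh)
      (integrable_finsetSum s hdiff),
      integral_sub hφh hψh, integral_finsetSum s hdiff, Finset.sum_eq_zero hconstr_diff, sub_zero]
  rw [← sub_nonneg, ← hgap]
  exact integral_nonneg hpt

theorem lmpu_test_optimal_general
    {Ω : Type*} [MeasurableSpace Ω] (μ : Measure Ω) (θ₀ : ℝ)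
    (f : ℝ → Ω → ℝ) (f' : ℝ → Ω → ℝ) (f'' : Ω → ℝ)
    (hpos : ∀ x, 0 < f θ₀ x)
    (hint0 : Integrable (f θ₀) μ) (hint1 : Integrable (f' θ₀) μ)
    (hint2 : Integrable f'' μ)
    (κ₁ κ₂ : ℝ)
    (S : Set Ω)
    (hS : S = {x | f'' x / f θ₀ x > κ₂ * (f' θ₀ x / f θ₀ x) + κ₁})
    (hSm : MeasurableSet S)
    (Φ : Ω → ℝ) (hΦ : Φ = S.indicator (fun _ => (1 : ℝ)))
    (ψ : Ω → ℝ)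
    (hψ0 : ∀ x, 0 ≤ ψ x) (hψ1 : ∀ x, ψ x ≤ 1)
    (hi1 : Integrable (fun x => ψ x * f θ₀ x) μ)
    (hi2 : Integrable (fun x => ψ x * f' θ₀ x) μ)
    (hi3 : Integrable (fun x => ψ x * f'' x) μ)
    (he1 : ∫ x, ψ x * f θ₀ x ∂μ = ∫ x, Φ x * f θ₀ x ∂μ)
    (he2 : ∫ x, ψ x * f' θ₀ x ∂μ = ∫ x, Φ x * f' θ₀ x ∂μ) :
    ∫ x, ψ x * f'' x ∂μ ≤ ∫ x, Φ x * f'' x ∂μ := by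
  subst hΦ
  have hmem : ∀ x, x ∈ S ↔
      0 < f'' x - ∑ i, ![κ₁, κ₂] i * ![f θ₀, f' θ₀] i x := by
    intro x
    rw [hS, Set.mem_ofPred_eq, gt_iff_lt, ← sub_pos, ← mul_div_assoc,
      div_add' _ _ _ (hpos x).ne', div_sub_div_same, div_pos_iff_of_pos_right (hpos x)]
    simp only [Fin.sum_univ_two, Matrix.cons_val_zero, Matrix.cons_val_one]
    ring_nf
  refine integral_mul_le_of_sub_mul_nonneg Finset.univ ![κ₁, κ₂] ?_ ?_
    (hint2.indicator_one_mul hSm) hi3 ?_ (indicator_one_sub_mul_nonneg hmem hψ0 hψ1)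
  · simpa [Fin.forall_fin_two] using
      ⟨hint0.indicator_one_mul hSm, hint1.indicator_one_mul hSm⟩
  · simpa [Fin.forall_fin_two] using ⟨hi1, hi2⟩
  · simpa [Fin.forall_fin_two] using ⟨he1, he2⟩

/-- Theorem 1 of the paper (the LMPU test): among tests with prescribed size and
vanishing first-order power derivative at `θ₀`, the test thresholding the LMPU
statistic (equivalently, the indicator of `{x : f''/f > κ̃₂ f'/f + κ̃₁}`)
maximizes the second-order power derivative at `θ₀`. -/
theorem lmpu_test_optimal
    {Ω : Type*} [MeasurableSpace Ω] (μ : Measure Ω) (θ₀ : ℝ)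
    (f : ℝ → Ω → ℝ) (f' : ℝ → Ω → ℝ) (f'' : Ω → ℝ)
    (hpos : ∀ x, 0 < f θ₀ x)
    (hd1 : ∀ x, ∀ᶠ θ in 𝓝 θ₀, HasDerivAt (fun t => f t x) (f' θ x) θ)
    (hd2 : ∀ x, HasDerivAt (fun θ => f' θ x) (f'' x) θ₀)
    (hint0 : Integrable (f θ₀) μ) (hint1 : Integrable (f' θ₀) μ)
    (hint2 : Integrable f'' μ)
    (κ₁ κ₂ : ℝ)
    (S : Set Ω)
    (hS : S = {x | f'' x / f θ₀ x > κ₂ * (f' θ₀ x / f θ₀ x) + κ₁})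
    (hSm : MeasurableSet S)
    (Φ : Ω → ℝ) (hΦ : Φ = S.indicator (fun _ => (1 : ℝ)))
    (ψ : Ω → ℝ) (hψm : Measurable ψ)
    (hψ0 : ∀ x, 0 ≤ ψ x) (hψ1 : ∀ x, ψ x ≤ 1)
    (hi1 : Integrable (fun x => ψ x * f θ₀ x) μ)
    (hi2 : Integrable (fun x => ψ x * f' θ₀ x) μ)
    (hi3 : Integrable (fun x => ψ x * f'' x) μ)
    (he1 : ∫ x, ψ x * f θ₀ x ∂μ = ∫ x, Φ x * f θ₀ x ∂μ)
    (he2 : ∫ x, ψ x * f' θ₀ x ∂μ = ∫ x, Φ x * f' θ₀ x ∂μ) :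
    ∫ x, ψ x * f'' x ∂μ ≤ ∫ x, Φ x * f'' x ∂μ :=
  lmpu_test_optimal_general μ θ₀ f f' f'' hpos hint0 hint1 hint2 κ₁ κ₂ S hS hSm Φ hΦ ψ hψ0 hψ1 hi1
    hi2 hi3 he1 he2
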